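/- arXiv:1904.10103 — 5 statements merged into one kernel-verified Lean document; each statement's English description precedes it below -/
import Mathlib

section
/- Let a, d ∈ ℝ and b = (b₁,b₂,b₃), c = (c₁,c₂,c₃) ∈ ℝ³. For each i ∈ {1,2,3}, writing {i,j,k} = {1,2,3}, define the symmetric 2×2 real matrix Sᵢ(v) with diagonal entries bⱼbₖ − a·cᵢ and cⱼcₖ − d·bᵢ, and both off-diagonal entries equal to a·d − bᵢcᵢ − (3·a·d − (b₁c₁ + b₂c₂ + b₃c₃))/2. Assume S₁(v), S₂(v), S₃(v) are all positive definite. Set b' = (b₁+b₂+b₃)/3 and c' = (c₁+c₂+c₃)/3. Then the symmetric 2×2 real matrix with diagonal entries b'² − a·c' and c'² − d·b', and both off-diagonal entries equal to (a·d − b'·c')/2, is positive definite. -/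
/-!
With `J = diag(1, -1)`, the projected matrix `S'` satisfies the identity
`18 • J S' J = 6 • (S₁ + S₂ + S₃) + ∑_{i < j} wᵢⱼ wᵢⱼᵀ`, where `wᵢⱼ = (bᵢ - bⱼ, cⱼ - cᵢ)`.
The right-hand side is positive definite plus positive semidefinite, and conjugation by the
invertible `J` preserves positive definiteness.
-/

open Matrix

theorem Matrix.posDef_fin_two_neg_offDiag_iff {R : Type*} [CommRing R] [PartialOrder R]
    [StarRing R] [TrivialStar R] {p m q : R} :
    !![p, -m; -m, q].PosDef ↔ !![p, m; m, q].PosDef := by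
  have hJ : IsUnit !![(1 : R), 0; 0, -1] := by
    simp [isUnit_iff_isUnit_det, det_fin_two_of]
  have hconj : star !![(1 : R), 0; 0, -1] * !![p, m; m, q] * !![1, 0; 0, -1] =
      !![p, -m; -m, q] := by
    rw [star_eq_conjTranspose, conjTranspose_eq_transpose_of_trivial]
    ext i j
    fin_cases i <;> fin_cases j <;> simp [mul_apply, Fin.sum_univ_two]
  rw [← hconj, IsUnit.posDef_star_left_conjugate_iff hJ]

/-- Positivity of a 2×2×2 real box is preserved under the GL₂-equivariant
projection to real binary cubic forms (Lemma 4.4 of the paper). -/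
theorem box_positivity_projects (a d b₁ b₂ b₃ c₁ c₂ c₃ : ℝ)
    (h1 : (!![b₂ * b₃ - a * c₁,
              a * d - b₁ * c₁ - (3 * a * d - (b₁ * c₁ + b₂ * c₂ + b₃ * c₃)) / 2;
              a * d - b₁ * c₁ - (3 * a * d - (b₁ * c₁ + b₂ * c₂ + b₃ * c₃)) / 2,
              c₂ * c₃ - d * b₁]).PosDef)
    (h2 : (!![b₁ * b₃ - a * c₂,
              a * d - b₂ * c₂ - (3 * a * d - (b₁ * c₁ + b₂ * c₂ + b₃ * c₃)) / 2;
              a * d - b₂ * c₂ - (3 * a * d - (b₁ * c₁ + b₂ * c₂ + b₃ * c₃)) / 2,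
              c₁ * c₃ - d * b₂]).PosDef)
    (h3 : (!![b₁ * b₂ - a * c₃,
              a * d - b₃ * c₃ - (3 * a * d - (b₁ * c₁ + b₂ * c₂ + b₃ * c₃)) / 2;
              a * d - b₃ * c₃ - (3 * a * d - (b₁ * c₁ + b₂ * c₂ + b₃ * c₃)) / 2,
              c₁ * c₂ - d * b₃]).PosDef) :
    (!![((b₁ + b₂ + b₃) / 3) ^ 2 - a * ((c₁ + c₂ + c₃) / 3),
        (a * d - ((b₁ + b₂ + b₃) / 3) * ((c₁ + c₂ + c₃) / 3)) / 2;
        (a * d - ((b₁ + b₂ + b₃) / 3) * ((c₁ + c₂ + c₃) / 3)) / 2,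
        ((c₁ + c₂ + c₃) / 3) ^ 2 - d * ((b₁ + b₂ + b₃) / 3)]).PosDef := by
  have hsum := (((((h1.add h2).add h3).smul (show (0 : ℝ) < 6 by norm_num)).add_posSemidef
    (posSemidef_vecMulVec_self_star ![b₁ - b₂, c₂ - c₁])).add_posSemidef
    (posSemidef_vecMulVec_self_star ![b₁ - b₃, c₃ - c₁])).add_posSemidef
    (posSemidef_vecMulVec_self_star ![b₂ - b₃, c₃ - c₂]) |>.smul (show (0 : ℝ) < 18⁻¹ by norm_num)
  rw [← posDef_fin_two_neg_offDiag_iff]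
  refine (congrArg PosDef ?_).mp hsum
  ext i j
  fin_cases i <;> fin_cases j <;> simp [vecHead, vecTail] <;> ring
end

section
/- Let a, d ∈ ℤ and b = (b₁,b₂,b₃), c = (c₁,c₂,c₃) ∈ ℤ³, and for each i ∈ {1,2,3}, writing {i,j,k} = {1,2,3}, define the symmetric 2×2 real matrix Sᵢ(v) with diagonal entries bⱼbₖ − a·cᵢ and cⱼcₖ − d·bᵢ, and both off-diagonal entries equal to a·d − bᵢcᵢ − (3·a·d − (b₁c₁ + b₂c₂ + b₃c₃))/2. Suppose that S₁(v), S₂(v), S₃(v) are all positive definite, that a = −1, d = 0, b₁+b₂+b₃ = 0, and c₁+c₂+c₃ = 3. Then b = (0,0,0) and c = (1,1,1). -/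
open Matrix

/-!
Positivity of the lower-right entries of `S₂` and `S₃` gives `c₁c₃ > 0` and `c₁c₂ > 0`, so the
`cᵢ` share a sign; with `c₁ + c₂ + c₃ = 3` they are positive integers, hence all equal to `1`.
Positivity of the determinants then reads `bᵢ² < bⱼbₖ + 1`, i.e. `bᵢ² ≤ bⱼbₖ`. Summing,
`∑ bᵢ² ≤ ∑ bⱼbₖ`, whereas `b₁ + b₂ + b₃ = 0` forces `2 ∑ bⱼbₖ = -∑ bᵢ²`; so `b = 0`.
-/

lemma Matrix.PosDef.sq_lt_mul_of_fin_two {p q r : ℝ} (h : (!![p, q; q, r]).PosDef) :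
    0 < r ∧ q ^ 2 < p * r := by
  have hr := h.diag_pos (i := 1)
  have hdet := h.det_pos
  rw [det_fin_two_of] at hdet
  simp only [of_apply, cons_val', cons_val_one, cons_val_fin_one] at hr
  exact ⟨hr, by linarith⟩

/-- Integral form of `(Sᵢ)₂₂ > 0` and `4 det Sᵢ > 0`, the factor `4` clearing the `/2`. -/
lemma box_slice_pos {a d bᵢ bⱼ bₖ cᵢ cⱼ cₖ s : ℤ}
    (h : (!![(bⱼ * bₖ - a * cᵢ : ℝ), (a * d - bᵢ * cᵢ : ℝ) - (3 * (a * d : ℝ) - (s : ℝ)) / 2;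
      (a * d - bᵢ * cᵢ : ℝ) - (3 * (a * d : ℝ) - (s : ℝ)) / 2, (cⱼ * cₖ - d * bᵢ : ℝ)]).PosDef) :
    0 < cⱼ * cₖ - d * bᵢ ∧
      (s - a * d - 2 * bᵢ * cᵢ) ^ 2 < 4 * (bⱼ * bₖ - a * cᵢ) * (cⱼ * cₖ - d * bᵢ) := by
  obtain ⟨hr, hdet⟩ := h.sq_lt_mul_of_fin_two
  constructor
  · exact_mod_cast hr
  · have : ((s - a * d - 2 * bᵢ * cᵢ : ℤ) : ℝ) ^ 2
        < ((4 * (bⱼ * bₖ - a * cᵢ) * (cⱼ * cₖ - d * bᵢ) : ℤ) : ℝ) := by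
      push_cast
      linarith
    exact_mod_cast this

lemma pos_of_mul_pos_of_add_pos {R : Type*} [CommRing R] [LinearOrder R] [IsStrictOrderedRing R]
    {x y z : R} (hs : 0 < x + y + z) (hxy : 0 < x * y) (hxz : 0 < x * z) :
    0 < x ∧ 0 < y ∧ 0 < z := by
  rcases pos_and_pos_or_neg_and_neg_of_mul_pos hxy with ⟨hx, hy⟩ | ⟨hx, hy⟩
  · exact ⟨hx, hy, pos_of_mul_pos_right hxz hx.le⟩
  · have hz := neg_of_mul_pos_right hxz hx.le
    linarith

lemma eq_zero_of_sq_le_mul_of_add_eq_zero {R : Type*} [CommRing R] [LinearOrder R]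
    [IsStrictOrderedRing R] {x y z : R} (hs : x + y + z = 0)
    (hx : x ^ 2 ≤ y * z) (hy : y ^ 2 ≤ x * z) (hz : z ^ 2 ≤ x * y) :
    x = 0 ∧ y = 0 ∧ z = 0 := by
  have hsq : x ^ 2 + y ^ 2 + z ^ 2 ≤ 0 := by nlinarith [sq_nonneg (x + y + z)]
  refine ⟨?_, ?_, ?_⟩ <;> nlinarith [sq_nonneg x, sq_nonneg y, sq_nonneg z]

/-- The only positive integral 2×2×2 box lying above the binary cubic form
`x³ - xy²` is `(-1, (0,0,0), (1,1,1), 0)` (from the proof of Corollary 4.6). -/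
theorem unique_box_above_cubic (a d b₁ b₂ b₃ c₁ c₂ c₃ : ℤ)
    (h1 : (!![(b₂ * b₃ - a * c₁ : ℝ),
              (a * d - b₁ * c₁ : ℝ) - (3 * (a * d : ℝ) - ((b₁ * c₁ + b₂ * c₂ + b₃ * c₃ : ℤ) : ℝ)) / 2;
              (a * d - b₁ * c₁ : ℝ) - (3 * (a * d : ℝ) - ((b₁ * c₁ + b₂ * c₂ + b₃ * c₃ : ℤ) : ℝ)) / 2,
              (c₂ * c₃ - d * b₁ : ℝ)]).PosDef)
    (h2 : (!![(b₁ * b₃ - a * c₂ : ℝ),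
              (a * d - b₂ * c₂ : ℝ) - (3 * (a * d : ℝ) - ((b₁ * c₁ + b₂ * c₂ + b₃ * c₃ : ℤ) : ℝ)) / 2;
              (a * d - b₂ * c₂ : ℝ) - (3 * (a * d : ℝ) - ((b₁ * c₁ + b₂ * c₂ + b₃ * c₃ : ℤ) : ℝ)) / 2,
              (c₁ * c₃ - d * b₂ : ℝ)]).PosDef)
    (h3 : (!![(b₁ * b₂ - a * c₃ : ℝ),
              (a * d - b₃ * c₃ : ℝ) - (3 * (a * d : ℝ) - ((b₁ * c₁ + b₂ * c₂ + b₃ * c₃ : ℤ) : ℝ)) / 2;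
              (a * d - b₃ * c₃ : ℝ) - (3 * (a * d : ℝ) - ((b₁ * c₁ + b₂ * c₂ + b₃ * c₃ : ℤ) : ℝ)) / 2,
              (c₁ * c₂ - d * b₃ : ℝ)]).PosDef)
    (ha : a = -1) (hd : d = 0) (hb : b₁ + b₂ + b₃ = 0) (hc : c₁ + c₂ + c₃ = 3) :
    b₁ = 0 ∧ b₂ = 0 ∧ b₃ = 0 ∧ c₁ = 1 ∧ c₂ = 1 ∧ c₃ = 1 := by
  subst ha hd
  obtain ⟨-, hb₁⟩ := box_slice_pos h1
  obtain ⟨hc₁₃, hb₂⟩ := box_slice_pos h2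
  obtain ⟨hc₁₂, hb₃⟩ := box_slice_pos h3
  obtain ⟨hc₁, hc₂, hc₃⟩ := pos_of_mul_pos_of_add_pos (by omega : 0 < c₁ + c₂ + c₃)
    (by simpa using hc₁₂) (by simpa using hc₁₃)
  obtain ⟨rfl, rfl, rfl⟩ : c₁ = 1 ∧ c₂ = 1 ∧ c₃ = 1 := by omega
  simp only [mul_one, hb] at hb₁ hb₂ hb₃
  obtain ⟨rfl, rfl, rfl⟩ := eq_zero_of_sq_le_mul_of_add_eq_zero hb
    (by linarith) (by linarith) (by linarith)
  simp
end

section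
/- Let n ≥ 1 and let V = ℝ⁴ × ℝⁿ with quadratic form q(u,v) = |u|² − |v|² (standard Euclidean norms), associated bilinear form (x,y) := q(x+y) − q(x) − q(y), and involution ι(u,v) = (u,−v). For y₁, y₂ ∈ V, with positive parts u₁, u₂ ∈ ℝ⁴, set S(y₁,y₂) = (1/2)·[[(y₁,y₁),(y₁,y₂)],[(y₁,y₂),(y₂,y₂)]] and R(y₁,y₂) = (1/2)·[[(y₁,ιy₁),(y₁,ιy₂)],[(y₁,ιy₂),(y₂,ιy₂)]]. Then det(S(y₁,y₂) + R(y₁,y₂)) = 4·(|u₁|²·|u₂|² − ⟨u₁,u₂⟩²); in particular det(S+R) ≥ 0, and if S(y₁,y₂) is positive definite then u₁ and u₂ are linearly independent and det(S+R) > 0. -/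
open Matrix

/-- The quadratic form of signature (4,n) on ℝ⁴ × ℝⁿ. -/
def qsig (n : ℕ) (y : (Fin 4 → ℝ) × (Fin n → ℝ)) : ℝ :=
  (∑ a, y.1 a * y.1 a) - ∑ a, y.2 a * y.2 a

/-- The associated bilinear form `(x, y) = q(x+y) - q(x) - q(y)`. -/
def bsig (n : ℕ) (x y : (Fin 4 → ℝ) × (Fin n → ℝ)) : ℝ :=
  qsig n (x + y) - qsig n x - qsig n y

/-- The involution `ι(u, v) = (u, -v)`. -/
def iotasig (n : ℕ) (y : (Fin 4 → ℝ) × (Fin n → ℝ)) : (Fin 4 → ℝ) × (Fin n → ℝ) :=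
  (y.1, -y.2)

/-- `S(y₁,y₂)`, the Gram-type matrix of the indefinite form. -/
noncomputable def Ssig (n : ℕ) (y₁ y₂ : (Fin 4 → ℝ) × (Fin n → ℝ)) : Matrix (Fin 2) (Fin 2) ℝ :=
  (1 / 2 : ℝ) • !![bsig n y₁ y₁, bsig n y₁ y₂; bsig n y₁ y₂, bsig n y₂ y₂]

/-- `R(y₁,y₂)`, the Gram-type matrix of the positive-definite majorant. -/
noncomputable def Rsig (n : ℕ) (y₁ y₂ : (Fin 4 → ℝ) × (Fin n → ℝ)) : Matrix (Fin 2) (Fin 2) ℝ :=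
  (1 / 2 : ℝ) • !![bsig n y₁ (iotasig n y₁), bsig n y₁ (iotasig n y₂);
                   bsig n y₁ (iotasig n y₂), bsig n y₂ (iotasig n y₂)]

/-!
In `(x, y) + (x, ι y)` the negative parts cancel, so `S + R` is twice the Gram matrix of the
positive parts `u₁, u₂`; its determinant is therefore `4` times their Gram determinant, which is
nonnegative, and positive when `u₁, u₂` are independent. Positive definiteness of `S` forces
independence: a relation `s u₁ + t u₂ = 0` gives `q(s y₁ + t y₂) = -|s v₁ + t v₂|² ≤ 0`.
-/

lemma bsig_eq_dotProduct (n : ℕ) (x y : (Fin 4 → ℝ) × (Fin n → ℝ)) :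
    bsig n x y = 2 * (x.1 ⬝ᵥ y.1 - x.2 ⬝ᵥ y.2) := by
  change (x.1 + y.1) ⬝ᵥ (x.1 + y.1) - (x.2 + y.2) ⬝ᵥ (x.2 + y.2) - (x.1 ⬝ᵥ x.1 - x.2 ⬝ᵥ x.2)
    - (y.1 ⬝ᵥ y.1 - y.2 ⬝ᵥ y.2) = _
  simp only [add_dotProduct, dotProduct_add, dotProduct_comm y.1 x.1, dotProduct_comm y.2 x.2]
  ring

lemma of_pair_mul_transpose {m R : Type*} [Fintype m] [CommRing R] (u v : m → R) :
    of ![u, v] * (of ![u, v])ᵀ = !![u ⬝ᵥ u, u ⬝ᵥ v; v ⬝ᵥ u, v ⬝ᵥ v] := by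
  ext i j
  fin_cases i <;> fin_cases j <;> rfl

lemma Ssig_add_Rsig (n : ℕ) (y₁ y₂ : (Fin 4 → ℝ) × (Fin n → ℝ)) :
    Ssig n y₁ y₂ + Rsig n y₁ y₂ = (2 : ℝ) • (of ![y₁.1, y₂.1] * (of ![y₁.1, y₂.1])ᵀ) := by
  rw [of_pair_mul_transpose, dotProduct_comm y₂.1]
  ext i j
  fin_cases i <;> fin_cases j <;> simp [Ssig, Rsig, bsig_eq_dotProduct, iotasig] <;> ring

lemma det_of_pair_mul_transpose {m R : Type*} [Fintype m] [CommRing R] (u v : m → R) :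
    (of ![u, v] * (of ![u, v])ᵀ).det = u ⬝ᵥ u * v ⬝ᵥ v - (u ⬝ᵥ v) ^ 2 := by
  rw [of_pair_mul_transpose, det_fin_two_of, dotProduct_comm v u, sq]

lemma dotProduct_Ssig_mulVec (n : ℕ) (y₁ y₂ : (Fin 4 → ℝ) × (Fin n → ℝ)) (c : Fin 2 → ℝ) :
    c ⬝ᵥ (Ssig n y₁ y₂ *ᵥ c) = qsig n (c 0 • y₁ + c 1 • y₂) := by
  change _ = (c 0 • y₁.1 + c 1 • y₂.1) ⬝ᵥ (c 0 • y₁.1 + c 1 • y₂.1)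
    - (c 0 • y₁.2 + c 1 • y₂.2) ⬝ᵥ (c 0 • y₁.2 + c 1 • y₂.2)
  simp only [add_dotProduct, dotProduct_add, smul_dotProduct, dotProduct_smul, smul_eq_mul,
    dotProduct_comm y₂.1 y₁.1, dotProduct_comm y₂.2 y₁.2]
  simp only [dotProduct, mulVec, Ssig, one_div, bsig_eq_dotProduct, Matrix.smul_apply, of_apply,
    cons_val', cons_val_fin_one, smul_eq_mul, Fin.sum_univ_two, cons_val_zero, cons_val_one]
  ring

lemma linearIndependent_fst_of_posDef_Ssig {n : ℕ} {y₁ y₂ : (Fin 4 → ℝ) × (Fin n → ℝ)}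
    (hS : (Ssig n y₁ y₂).PosDef) : LinearIndependent ℝ ![y₁.1, y₂.1] := by
  refine LinearIndependent.pair_iff.2 fun s t hst => ?_
  by_contra hne
  have hc : ![s, t] ≠ 0 := fun h => hne ⟨congrFun h 0, congrFun h 1⟩
  have hpos := hS.dotProduct_mulVec_pos hc
  have hq : qsig n (s • y₁ + t • y₂) = -((s • y₁.2 + t • y₂.2) ⬝ᵥ (s • y₁.2 + t • y₂.2)) := by
    change (s • y₁.1 + t • y₂.1) ⬝ᵥ (s • y₁.1 + t • y₂.1) - _ = _
    rw [hst, zero_dotProduct, zero_sub]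
    rfl
  rw [star_trivial, dotProduct_Ssig_mulVec] at hpos
  simp only [cons_val_zero, cons_val_one, hq] at hpos
  have hnonneg := dotProduct_self_star_nonneg (s • y₁.2 + t • y₂.2)
  rw [star_trivial] at hnonneg
  linarith

theorem det_S_add_R_general (n : ℕ) (y₁ y₂ : (Fin 4 → ℝ) × (Fin n → ℝ)) :
    (Ssig n y₁ y₂ + Rsig n y₁ y₂).det =
      4 * ((∑ a, y₁.1 a * y₁.1 a) * (∑ a, y₂.1 a * y₂.1 a) - (∑ a, y₁.1 a * y₂.1 a) ^ 2) ∧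
    0 ≤ (Ssig n y₁ y₂ + Rsig n y₁ y₂).det ∧
    ((Ssig n y₁ y₂).PosDef →
      LinearIndependent ℝ ![y₁.1, y₂.1] ∧ 0 < (Ssig n y₁ y₂ + Rsig n y₁ y₂).det) := by
  set A : Matrix (Fin 2) (Fin 4) ℝ := of ![y₁.1, y₂.1]
  have hdet : (Ssig n y₁ y₂ + Rsig n y₁ y₂).det = 4 * (A * Aᴴ).det := by
    rw [Ssig_add_Rsig, det_smul, conjTranspose_eq_transpose_of_trivial, Fintype.card_fin]
    congr 1
    norm_num
  refine ⟨by rw [hdet, conjTranspose_eq_transpose_of_trivial, det_of_pair_mul_transpose]; rfl,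
    ?_, fun hS => ?_⟩
  · rw [hdet]
    exact mul_nonneg zero_le_four (posSemidef_self_mul_conjTranspose A).det_nonneg
  · have hli := linearIndependent_fst_of_posDef_Ssig hS
    refine ⟨hli, ?_⟩
    rw [hdet]
    exact mul_pos four_pos (PosDef.mul_conjTranspose_self A (vecMul_injective_iff.2 hli)).det_pos

/-- Lemma 3.6 of the paper: `det(S + R)` equals four times the Gram determinant of the
positive parts; in particular it is nonnegative, and positive when `S` is positive definite. -/
theorem det_S_add_R (n : ℕ) (hn : 1 ≤ n) (y₁ y₂ : (Fin 4 → ℝ) × (Fin n → ℝ)) :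
    (Ssig n y₁ y₂ + Rsig n y₁ y₂).det =
      4 * ((∑ a, y₁.1 a * y₁.1 a) * (∑ a, y₂.1 a * y₂.1 a) - (∑ a, y₁.1 a * y₂.1 a) ^ 2) ∧
    0 ≤ (Ssig n y₁ y₂ + Rsig n y₁ y₂).det ∧
    ((Ssig n y₁ y₂).PosDef →
      LinearIndependent ℝ ![y₁.1, y₂.1] ∧ 0 < (Ssig n y₁ y₂ + Rsig n y₁ y₂).det) :=
  det_S_add_R_general n y₁ y₂
end

section
/- Let m ≥ 8 be an integer, let T be a positive definite symmetric real 2×2 matrix, and let w be an integer with w > m(m−1)/2. For y₁, y₂ ∈ ℝ^m let R(y₁,y₂) denote the 2×2 Gram matrix [[⟨y₁,y₁⟩, ⟨y₁,y₂⟩],[⟨y₁,y₂⟩, ⟨y₂,y₂⟩]] with respect to the standard inner product. Then the sum over all pairs (y₁, y₂) ∈ ℤ^m × ℤ^m of det(R(y₁,y₂))^{w/2} / det(T + R(y₁,y₂))^{w + 1/2} converges (is finite). -/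
/-!
Since `T` is positive definite, `det (T + R) ≥ det R + c (1 + tr R)` for some `c > 0` and every
positive semidefinite `2 × 2` matrix `R`: the mixed term of the `2 × 2` determinant dominates a
multiple of `tr R`. For `R = R(y₁, y₂)` this bounds the summand by
`c ^ (-e) (1 + |y₁|² + |y₂|²) ^ (-e)` with `e = (w + 1) / 2`, and since each of the `2m` factors
`1 + y²` is at most `1 + |y₁|² + |y₂|²`, that is at most a product of one-dimensional terms
`(1 + y²) ^ (-e / 2m)`. The hypothesis on `w` gives `e > m`, so each one-dimensional series converges.
-/

open Matrix

/-- The Gram matrix of `y₁, y₂ ∈ ℝ^m` for the standard inner product. -/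
def gram (m : ℕ) (y₁ y₂ : Fin m → ℤ) : Matrix (Fin 2) (Fin 2) ℝ :=
  !![∑ a, (y₁ a : ℝ) * (y₁ a : ℝ), ∑ a, (y₁ a : ℝ) * (y₂ a : ℝ);
     ∑ a, (y₁ a : ℝ) * (y₂ a : ℝ), ∑ a, (y₂ a : ℝ) * (y₂ a : ℝ)]

lemma two_mul_mul_le_of_sq_le_mul {a b c p q r : ℝ} (ha : 0 ≤ a) (hc : 0 ≤ c)
    (hb : b ^ 2 ≤ a * c) (hp : 0 ≤ p) (hr : 0 ≤ r) (hq : q ^ 2 ≤ p * r) :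
    2 * (b * q) ≤ a * r + c * p := by
  have hsq : (2 * (b * q)) ^ 2 ≤ (a * r + c * p) ^ 2 := by
    nlinarith [sq_nonneg (a * r - c * p), mul_le_mul hb hq (sq_nonneg q) (by positivity)]
  exact (abs_le_of_sq_le_sq' hsq (by positivity)).2

namespace Matrix

theorem PosDef.exists_det_add_ge_fin_two {T : Matrix (Fin 2) (Fin 2) ℝ} (hT : T.PosDef) :
    ∃ c > 0, ∀ R : Matrix (Fin 2) (Fin 2) ℝ, R.PosSemidef →
      R.det + c * (1 + R.trace) ≤ (T + R).det := by
  have hT10 : T 1 0 = T 0 1 := by simpa using congrFun (congrFun hT.isHermitian 0) 1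
  have hT00 : 0 < T 0 0 := hT.diag_pos
  have hT11 : 0 < T 1 1 := hT.diag_pos
  set δ := T 0 0 * T 1 1 - T 0 1 ^ 2 with hδ_def
  have hδ : 0 < δ := by
    have := hT.det_pos; rw [det_fin_two, hT10] at this; nlinarith
  set ε := δ / (T 0 0 + T 1 1)
  have hετ : ε * (T 0 0 + T 1 1) = δ := div_mul_cancel₀ _ (by positivity)
  have hε0 : 0 < ε := by positivity
  refine ⟨min δ ε, lt_min hδ hε0, fun R hR => ?_⟩
  have hR10 : R 1 0 = R 0 1 := by simpa using congrFun (congrFun hR.isHermitian 0) 1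
  have hR00 : 0 ≤ R 0 0 := hR.diag_nonneg
  have hR11 : 0 ≤ R 1 1 := hR.diag_nonneg
  have hRdet : R 0 1 ^ 2 ≤ R 0 0 * R 1 1 := by
    have := hR.det_nonneg; rw [det_fin_two, hR10] at this; nlinarith
  -- the mixed term of `det (T + R)` against `T - ε • 1`, which is positive semidefinite
  -- because `ε * tr T = det T` makes its determinant `ε ^ 2`
  have hmixed : 2 * (T 0 1 * R 0 1) ≤ (T 0 0 - ε) * R 1 1 + (T 1 1 - ε) * R 0 0 :=
    two_mul_mul_le_of_sq_le_mul (by nlinarith) (by nlinarith) (by nlinarith) hR00 hR11 hRdet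
  have hc : min δ ε * (1 + (R 0 0 + R 1 1)) ≤ δ + ε * (R 0 0 + R 1 1) := by
    rw [mul_one_add]
    exact add_le_add (min_le_left _ _)
      (mul_le_mul_of_nonneg_right (min_le_right _ _) (by positivity))
  rw [det_fin_two, det_fin_two, trace_fin_two]
  simp only [add_apply, hT10, hR10]
  nlinarith
end Matrix

lemma gram_eq_conjTranspose_mul (m : ℕ) (y₁ y₂ : Fin m → ℤ) :
    gram m y₁ y₂ = (of fun a i => (![y₁, y₂] i a : ℝ))ᴴ * of fun a i => (![y₁, y₂] i a : ℝ) := by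
  ext i j
  fin_cases i <;> fin_cases j <;> simp [_root_.gram, mul_apply, mul_comm]

lemma posSemidef_gram (m : ℕ) (y₁ y₂ : Fin m → ℤ) : (gram m y₁ y₂).PosSemidef := by
  rw [gram_eq_conjTranspose_mul]
  exact posSemidef_conjTranspose_mul_self _

lemma trace_gram (m : ℕ) (y₁ y₂ : Fin m → ℤ) :
    (gram m y₁ y₂).trace = ∑ a, ((y₁ a : ℝ) ^ 2 + (y₂ a : ℝ) ^ 2) := by
  simp [_root_.gram, trace_fin_two, Finset.sum_add_distrib, sq]

lemma rpow_div_rpow_add_le {d c D u e : ℝ} (hd : 0 ≤ d) (hc : 0 < c) (hD : d + c ≤ D)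
    (hu : 0 ≤ u) (he : 0 ≤ e) : d ^ u / D ^ (u + e) ≤ c ^ (-e) := by
  have hDpos : 0 < D := by linarith
  calc d ^ u / D ^ (u + e) ≤ D ^ u / D ^ (u + e) :=
        div_le_div_of_nonneg_right (Real.rpow_le_rpow hd (by linarith) hu) (by positivity)
    _ = D ^ (-e) := by rw [← Real.rpow_sub hDpos]; ring_nf
    _ ≤ c ^ (-e) := Real.rpow_le_rpow_of_nonpos hc (by linarith) (by linarith)

lemma rpow_neg_mul_card_le_prod_rpow_neg {ι : Type*} [Fintype ι] {f : ι → ℝ} {Q t : ℝ}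
    (hf : ∀ i, 0 < f i) (hfQ : ∀ i, f i ≤ Q) (ht : 0 ≤ t) :
    Q ^ (-(Fintype.card ι * t)) ≤ ∏ i, f i ^ (-t) := by
  cases isEmpty_or_nonempty ι with
  | inl _ => simp
  | inr hι =>
    have hQ : 0 ≤ Q := (hf hι.some).le.trans (hfQ _)
    rw [Real.finsetProd_rpow _ _ fun i _ => (hf i).le, neg_mul_eq_mul_neg,
      Real.rpow_natCast_mul hQ]
    exact Real.rpow_le_rpow_of_nonpos (Finset.prod_pos fun i _ => hf i)
      ((Finset.prod_le_prod (fun i _ => (hf i).le) fun i _ => hfQ i).trans_eq (by simp))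
      (neg_nonpos.2 ht)

lemma summable_one_add_sq_rpow_neg {t : ℝ} (ht : 1 / 2 < t) :
    Summable fun k : ℤ => (1 + (k : ℝ) ^ 2) ^ (-t) := by
  refine (Real.summable_abs_int_rpow (b := 2 * t) (by linarith)).of_norm_bounded_eventually ?_
  filter_upwards [Filter.eventually_cofinite_ne 0] with k hk
  have hk2 : 0 < (k : ℝ) ^ 2 := by positivity
  have habs : |(k : ℝ)| ^ (-(2 * t)) = ((k : ℝ) ^ 2) ^ (-t) := by
    rw [← sq_abs, ← Real.rpow_natCast_mul (abs_nonneg _)]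
    norm_num
  rw [Real.norm_of_nonneg (by positivity), habs]
  exact Real.rpow_le_rpow_of_nonpos hk2 (by linarith) (by linarith)

lemma summable_prod_pi_of_nonneg {β : Type*} {f : β → ℝ} (hf : 0 ≤ f) (hs : Summable f) (n : ℕ) :
    Summable fun y : Fin n → β => ∏ a, f (y a) := by
  induction n with
  | zero => exact .of_finite
  | succ n ih =>
    rw [← (Fin.consEquiv fun _ => β).summable_iff]
    refine (hs.mul_of_nonneg ih hf fun y => Finset.prod_nonneg fun a _ => hf _).congr fun p => ?_
    simp [Fin.consEquiv, Fin.prod_univ_succ]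

lemma one_add_trace_gram_rpow_le (m : ℕ) (y₁ y₂ : Fin m → ℤ) {t : ℝ} (ht : 0 ≤ t) :
    (1 + (gram m y₁ y₂).trace) ^ (-(2 * m * t)) ≤
      (∏ a, (1 + (y₁ a : ℝ) ^ 2) ^ (-t)) * ∏ a, (1 + (y₂ a : ℝ) ^ 2) ^ (-t) := by
  have hf : ∀ i, 1 + ((Sum.elim y₁ y₂ i : ℤ) : ℝ) ^ 2 ≤ 1 + (gram m y₁ y₂).trace := by
    have hle : ∀ a, (y₁ a : ℝ) ^ 2 + (y₂ a : ℝ) ^ 2 ≤ ∑ b, ((y₁ b : ℝ) ^ 2 + (y₂ b : ℝ) ^ 2) :=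
      fun a => Finset.single_le_sum (f := fun b => (y₁ b : ℝ) ^ 2 + (y₂ b : ℝ) ^ 2)
        (fun b _ => by positivity) (Finset.mem_univ a)
    rintro (a | a) <;> simp only [Sum.elim_inl, Sum.elim_inr, trace_gram] <;>
      nlinarith [hle a, sq_nonneg (y₁ a : ℝ), sq_nonneg (y₂ a : ℝ)]
  have key := rpow_neg_mul_card_le_prod_rpow_neg (fun i => by positivity) hf ht
  simp only [Fintype.prod_sum_type, Sum.elim_inl, Sum.elim_inr, Fintype.card_sum,
    Fintype.card_fin] at key
  convert key using 3
  push_cast; ring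

theorem finiteness_lemma_general (m : ℕ) (hm : 8 ≤ m)
    (T : Matrix (Fin 2) (Fin 2) ℝ) (hTpos : T.PosDef)
    (w : ℤ) (hw : (m * (m - 1) : ℝ) / 2 < (w : ℝ)) :
    Summable (fun p : (Fin m → ℤ) × (Fin m → ℤ) =>
      (gram m p.1 p.2).det ^ ((w : ℝ) / 2) /
        (T + gram m p.1 p.2).det ^ ((w : ℝ) + 1 / 2)) := by
  obtain ⟨c, hc, hdet⟩ := hTpos.exists_det_add_ge_fin_two
  have hm' : (8 : ℝ) ≤ m := by exact_mod_cast hm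
  have hw0 : (0 : ℝ) ≤ w := by nlinarith
  -- `1 / 2 < t` amounts to `2 * m - 1 < w`, which follows from `hw` once `m ≥ 5`
  set t : ℝ := ((w : ℝ) + 1) / (4 * m)
  have ht : 1 / 2 < t := by rw [lt_div_iff₀ (by positivity)]; nlinarith
  have hexp : (w : ℝ) + 1 / 2 = w / 2 + 2 * m * t := by simp only [t]; field_simp; ring
  let F : (Fin m → ℤ) → ℝ := fun y => ∏ a, (1 + (y a : ℝ) ^ 2) ^ (-t)
  have hF0 : 0 ≤ F := fun y => Finset.prod_nonneg fun a _ => by positivity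
  have hF : Summable F :=
    summable_prod_pi_of_nonneg (fun k => by positivity) (summable_one_add_sq_rpow_neg ht) m
  have hR (p : (Fin m → ℤ) × (Fin m → ℤ)) := posSemidef_gram m p.1 p.2
  refine .of_nonneg_of_le (fun p => ?_) (fun p => ?_)
    ((hF.mul_of_nonneg hF hF0 hF0).mul_left (c ^ (-(2 * m * t))))
  · exact div_nonneg (Real.rpow_nonneg (hR p).det_nonneg _) (Real.rpow_nonneg
      (by nlinarith [(hR p).det_nonneg, (hR p).trace_nonneg, hdet _ (hR p)]) _)
  have htr : 0 ≤ (gram m p.1 p.2).trace := (hR p).trace_nonneg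
  rw [hexp]
  calc _ ≤ (c * (1 + (gram m p.1 p.2).trace)) ^ (-(2 * m * t)) :=
        rpow_div_rpow_add_le (hR p).det_nonneg (by positivity) (hdet _ (hR p)) (by linarith)
          (by positivity)
    _ = c ^ (-(2 * m * t)) * (1 + (gram m p.1 p.2).trace) ^ (-(2 * m * t)) :=
        Real.mul_rpow hc.le (by positivity)
    _ ≤ c ^ (-(2 * m * t)) * (F p.1 * F p.2) := by
        gcongr
        exact one_add_trace_gram_rpow_le m p.1 p.2 (by linarith)

/-- The finiteness estimate of Lemma 3.7 of the paper: for `T` positive definite and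
`w > m(m-1)/2`, the sum over integer pairs of `det(R)^{w/2} / det(T+R)^{w+1/2}` converges. -/
theorem finiteness_lemma (m : ℕ) (hm : 8 ≤ m)
    (T : Matrix (Fin 2) (Fin 2) ℝ) (hT : T.IsSymm) (hTpos : T.PosDef)
    (w : ℤ) (hw : (m * (m - 1) : ℝ) / 2 < (w : ℝ)) :
    Summable (fun p : (Fin m → ℤ) × (Fin m → ℤ) =>
      (gram m p.1 p.2).det ^ ((w : ℝ) / 2) /
        (T + gram m p.1 p.2).det ^ ((w : ℝ) + 1 / 2)) :=
  finiteness_lemma_general m hm T hTpos w hw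
end

section
/- Let k be a field of characteristic zero, V a k-vector space with symmetric bilinear form B, and W = k⁴ with symplectic form ⟨·,·⟩ and basis e₁, e₂, f₁, f₂ satisfying ⟨eᵢ,fⱼ⟩ = δᵢⱼ, ⟨eᵢ,eⱼ⟩ = ⟨fᵢ,fⱼ⟩ = 0. Suppose b₁, b₂, b₋₁, b₋₂ ∈ V satisfy B(bᵢ,bⱼ) = B(b₋ᵢ,b₋ⱼ) = 0 and B(bᵢ,b₋ⱼ) = δᵢⱼ, and x₁, x₂, y₁, y₂ ∈ V satisfy B(xᵢ, b_{±j}) = B(yᵢ, b_{±j}) = 0 for all i,j. Let w₁, w₂ lie in the span of f₁, f₂. Equip V ⊗ W with the bilinear form Ω = B ⊗ ⟨·,·⟩. Define z_X = b₁⊗w₁ + b₂⊗w₂ + y₁⊗e₁ + y₂⊗e₂ and z_Y = −x₁⊗w₁ − x₂⊗w₂ − (1/2)(B(x₁,x₁)b₋₁ + B(x₂,x₁)b₋₂)⊗w₁ − (1/2)(B(x₁,x₂)b₋₁ + B(x₂,x₂)b₋₂)⊗w₂ + (B(x₁,y₁)b₋₁ + B(x₂,y₁)b₋₂)⊗e₁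 + (B(x₁,y₂)b₋₁ + B(x₂,y₂)b₋₂)⊗e₂. Then (1/2)·Ω(z_X, z_Y) = B(x₁,y₁)⟨w₁,e₁⟩ + B(x₁,y₂)⟨w₁,e₂⟩ + B(x₂,y₁)⟨w₂,e₁⟩ + B(x₂,y₂)⟨w₂,e₂⟩. -/
open TensorProduct LinearMap

/-
Write `z_X = β + η` with `β = Σ bᵢ ⊗ wᵢ`, `η = Σ yᵢ ⊗ eᵢ`, and `z_Y = -ξ - ½ Dξ + Dη` with
`ξ = Σ xᵢ ⊗ wᵢ`, where `D = d ⊗ id` for `d v = Σⱼ B(xⱼ, v) b₋ⱼ`. Because `B` is symmetric and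
`⟨·,·⟩` alternating, `Ω` is alternating. The duality `B(bᵢ, b₋ⱼ) = δᵢⱼ` gives `Ω(β, Dt) = Ω(ξ, t)`,
while `Ω(η, Dt) = 0` and `Ω(β, ξ) = 0` by orthogonality. Hence
`Ω(z_X, z_Y) = -½ Ω(ξ, ξ) + Ω(ξ, η) - Ω(η, ξ) = 2 Ω(ξ, η)`.
-/

/-- The standard symplectic form on `k⁴`, with respect to the basis
`e₁ = ![1,0,0,0]`, `e₂ = ![0,1,0,0]`, `f₁ = ![0,0,1,0]`, `f₂ = ![0,0,0,1]`,
so that `⟨eᵢ, fⱼ⟩ = δᵢⱼ` and `⟨eᵢ,eⱼ⟩ = ⟨fᵢ,fⱼ⟩ = 0`. -/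
noncomputable def sympForm (k : Type*) [Field k] : LinearMap.BilinForm k (Fin 4 → k) :=
  LinearMap.mk₂ k (fun u v => u 0 * v 2 - u 2 * v 0 + u 1 * v 3 - u 3 * v 1)
    (by intros; simp; ring) (by intros; simp; ring)
    (by intros; simp; ring) (by intros; simp; ring)

open LinearMap (BilinForm)

namespace LinearMap.BilinForm

variable {k : Type*} [CommRing k]

theorem IsAlt.apply_add_sub_smul_add {M : Type*} [AddCommGroup M] [Module k M]
    {Ω : BilinForm k M} (hΩ : Ω.IsAlt) (D : M →ₗ[k] M) (c : k) {β η ξ : M}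
    (hβξ : Ω β ξ = 0) (hηD : ∀ t, Ω η (D t) = 0) (hβD : ∀ t, Ω β (D t) = Ω ξ t) :
    Ω (β + η) (-ξ - c • D ξ + D η) = 2 * Ω ξ η := by
  have hηξ : Ω η ξ = -Ω ξ η := (hΩ.neg_eq ξ η).symm
  simp only [map_add, map_sub, map_neg, map_smul, LinearMap.add_apply, hβξ, hηD, hβD,
    hΩ.self_eq_zero, hηξ, smul_eq_mul]
  ring

variable {V W : Type*} [AddCommGroup V] [Module k V] [AddCommGroup W] [Module k W]
  {B : BilinForm k V} {ω : BilinForm k W}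

theorem tmul_apply_tmul (B : BilinForm k V) (ω : BilinForm k W) (v v' : V) (w w' : W) :
    B.tmul ω (v ⊗ₜ w) (v' ⊗ₜ w') = B v v' * ω w w' :=
  mul_comm _ _

theorem IsSymm.isAlt_tmul (hB : B.IsSymm) (hω : ω.IsAlt) : BilinForm.IsAlt (B.tmul ω) := by
  have hanti : ∀ s t, B.tmul ω s t = -B.tmul ω t s := by
    suffices B.tmul ω = -(B.tmul ω).flip from fun s t => congr($this s t)
    refine TensorProduct.ext' fun v w => TensorProduct.ext' fun v' w' => ?_
    simp only [neg_apply, LinearMap.flip_apply, tmul_apply_tmul, hB.eq v, ← hω.neg_eq w', mul_neg]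
  intro t
  induction t using TensorProduct.induction_on with
  | zero => simp
  | tmul v w => simp [hω.self_eq_zero]
  | add s t hs ht => simp [hs, ht, hanti s t]

theorem tmul_apply_rTensor {u u' : V} {d : V →ₗ[k] V} (hd : ∀ v, B u (d v) = B u' v) (w : W)
    (t : V ⊗[k] W) : B.tmul ω (u ⊗ₜ w) (d.rTensor W t) = B.tmul ω (u' ⊗ₜ w) t := by
  induction t using TensorProduct.induction_on with
  | zero => simp
  | tmul v w' => simp only [rTensor_tmul, tmul_apply_tmul, hd]
  | add s t hs ht => simp only [map_add, hs, ht]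

variable {ι : Type*} [Fintype ι]

def sumSmulRight (B : BilinForm k V) (x bm : ι → V) : V →ₗ[k] V :=
  ∑ j, (B (x j)).smulRight (bm j)

theorem sumSmulRight_apply (x bm : ι → V) (v : V) :
    sumSmulRight B x bm v = ∑ j, B (x j) v • bm j := by
  simp [sumSmulRight]

theorem apply_sumSmulRight (x bm : ι → V) (u v : V) :
    B u (sumSmulRight B x bm v) = ∑ j, B (x j) v * B u (bm j) := by
  simp [sumSmulRight_apply]

theorem tmul_sum_add_sum_eq_two_mul [DecidableEq ι] (hB : B.IsSymm) (hω : ω.IsAlt)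
    {b bm x y : ι → V} (w e : ι → W)
    (hbbm : ∀ i j, B (b i) (bm j) = if i = j then 1 else 0)
    (hxb : ∀ i j, B (x i) (b j) = 0) (hybm : ∀ i j, B (y i) (bm j) = 0) (c : k) :
    B.tmul ω (∑ i, b i ⊗ₜ w i + ∑ i, y i ⊗ₜ e i)
      (-∑ i, x i ⊗ₜ w i - c • (sumSmulRight B x bm).rTensor W (∑ i, x i ⊗ₜ w i)
        + (sumSmulRight B x bm).rTensor W (∑ i, y i ⊗ₜ e i)) =
      2 * ∑ i, ∑ j, B (x i) (y j) * ω (w i) (e j) := by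
  refine ((hB.isAlt_tmul hω).apply_add_sub_smul_add _ c ?_ ?_ ?_).trans ?_
  · simp [map_sum, hB.eq (b _), hxb]
  · intro t
    have hyd : ∀ i v, B (y i) (sumSmulRight B x bm v) = B 0 v := by
      simp [apply_sumSmulRight, hybm]
    simp [map_sum, tmul_apply_rTensor (hyd _)]
  · intro t
    have hbd : ∀ i v, B (b i) (sumSmulRight B x bm v) = B (x i) v := by
      simp [apply_sumSmulRight, hbbm]
    simp [map_sum, tmul_apply_rTensor (hbd _)]
  · simp only [map_sum, LinearMap.sum_apply, tmul_apply_tmul]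
    rw [Finset.sum_comm]

end LinearMap.BilinForm

theorem sympForm_isAlt (k : Type*) [Field k] : (sympForm k).IsAlt := fun u => by
  simp only [sympForm, LinearMap.mk₂_apply]
  ring

theorem half_pairing_of_projections_general
    (k : Type*) [Field k] [CharZero k]
    (V : Type*) [AddCommGroup V] [Module k V]
    (B : LinearMap.BilinForm k V) (hB : B.IsSymm)
    (b₁ b₂ bm₁ bm₂ x₁ x₂ y₁ y₂ : V)
    (hbbm : B b₁ bm₁ = 1 ∧ B b₁ bm₂ = 0 ∧ B b₂ bm₁ = 0 ∧ B b₂ bm₂ = 1)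
    (hx : ∀ i ∈ ({x₁, x₂, y₁, y₂} : Set V), B i b₁ = 0 ∧ B i b₂ = 0 ∧ B i bm₁ = 0 ∧ B i bm₂ = 0)
    (e₁ e₂ : Fin 4 → k)
    (w₁ w₂ : Fin 4 → k)
    (zX zY : V ⊗[k] (Fin 4 → k))
    (hzX : zX = b₁ ⊗ₜ w₁ + b₂ ⊗ₜ w₂ + y₁ ⊗ₜ e₁ + y₂ ⊗ₜ e₂)
    (hzY : zY = -(x₁ ⊗ₜ w₁) - x₂ ⊗ₜ w₂
        - ((1 / 2 : k) • (B x₁ x₁ • bm₁ + B x₂ x₁ • bm₂)) ⊗ₜ w₁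
        - ((1 / 2 : k) • (B x₁ x₂ • bm₁ + B x₂ x₂ • bm₂)) ⊗ₜ w₂
        + (B x₁ y₁ • bm₁ + B x₂ y₁ • bm₂) ⊗ₜ e₁
        + (B x₁ y₂ • bm₁ + B x₂ y₂ • bm₂) ⊗ₜ e₂) :
    (1 / 2 : k) * (LinearMap.BilinForm.tmul B (sympForm k)) zX zY =
      B x₁ y₁ * sympForm k w₁ e₁ + B x₁ y₂ * sympForm k w₁ e₂
        + B x₂ y₁ * sympForm k w₂ e₁ + B x₂ y₂ * sympForm k w₂ e₂ := by
  obtain ⟨hx₁b₁, hx₁b₂, -, -⟩ := hx x₁ (by simp)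
  obtain ⟨hx₂b₁, hx₂b₂, -, -⟩ := hx x₂ (by simp)
  obtain ⟨-, -, hy₁bm₁, hy₁bm₂⟩ := hx y₁ (by simp)
  obtain ⟨-, -, hy₂bm₁, hy₂bm₂⟩ := hx y₂ (by simp)
  have key := LinearMap.BilinForm.tmul_sum_add_sum_eq_two_mul hB (sympForm_isAlt k)
    (b := ![b₁, b₂]) (bm := ![bm₁, bm₂]) (x := ![x₁, x₂]) (y := ![y₁, y₂]) ![w₁, w₂] ![e₁, e₂]
    (by simp [Fin.forall_fin_two, hbbm])
    (by simp [Fin.forall_fin_two, hx₁b₁, hx₁b₂, hx₂b₁, hx₂b₂])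
    (by simp [Fin.forall_fin_two, hy₁bm₁, hy₁bm₂, hy₂bm₁, hy₂bm₂]) (1 / 2)
  have hzX' : zX = ∑ i, ![b₁, b₂] i ⊗ₜ ![w₁, w₂] i + ∑ i, ![y₁, y₂] i ⊗ₜ ![e₁, e₂] i := by
    simp [hzX, Fin.sum_univ_two, add_assoc]
  have hzY' : zY = -∑ i, ![x₁, x₂] i ⊗ₜ ![w₁, w₂] i
      - (1 / 2 : k) • (LinearMap.BilinForm.sumSmulRight B ![x₁, x₂] ![bm₁, bm₂]).rTensor _
          (∑ i, ![x₁, x₂] i ⊗ₜ ![w₁, w₂] i)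
      + (LinearMap.BilinForm.sumSmulRight B ![x₁, x₂] ![bm₁, bm₂]).rTensor _
          (∑ i, ![y₁, y₂] i ⊗ₜ ![e₁, e₂] i) := by
    simp only [hzY, Fin.sum_univ_two, map_add, rTensor_tmul,
      LinearMap.BilinForm.sumSmulRight_apply, Matrix.cons_val_zero, Matrix.cons_val_one, smul_add,
      smul_tmul']
    abel
  rw [hzX', hzY', key, Fin.sum_univ_two, Fin.sum_univ_two, Fin.sum_univ_two]
  simp only [Matrix.cons_val_zero, Matrix.cons_val_one]
  ring

/-- Lemma 2.4 of the paper: the symplectic pairing of the two Lagrangian projections of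
`z = (b₁w₁ + b₂w₂ + y₁e₁ + y₂e₂)·exp(x₁b₋₁ + x₂b₋₂)` in `V ⊗ W` computes the character
`(x₁,y₁)⟨w₁,e₁⟩ + (x₁,y₂)⟨w₁,e₂⟩ + (x₂,y₁)⟨w₂,e₁⟩ + (x₂,y₂)⟨w₂,e₂⟩`. -/
theorem half_pairing_of_projections
    (k : Type*) [Field k] [CharZero k]
    (V : Type*) [AddCommGroup V] [Module k V]
    (B : LinearMap.BilinForm k V) (hB : B.IsSymm)
    (b₁ b₂ bm₁ bm₂ x₁ x₂ y₁ y₂ : V)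
    (hbb : B b₁ b₁ = 0 ∧ B b₁ b₂ = 0 ∧ B b₂ b₁ = 0 ∧ B b₂ b₂ = 0)
    (hbmbm : B bm₁ bm₁ = 0 ∧ B bm₁ bm₂ = 0 ∧ B bm₂ bm₁ = 0 ∧ B bm₂ bm₂ = 0)
    (hbbm : B b₁ bm₁ = 1 ∧ B b₁ bm₂ = 0 ∧ B b₂ bm₁ = 0 ∧ B b₂ bm₂ = 1)
    (hx : ∀ i ∈ ({x₁, x₂, y₁, y₂} : Set V), B i b₁ = 0 ∧ B i b₂ = 0 ∧ B i bm₁ = 0 ∧ B i bm₂ = 0)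
    (e₁ e₂ f₁ f₂ : Fin 4 → k)
    (he₁ : e₁ = ![1, 0, 0, 0]) (he₂ : e₂ = ![0, 1, 0, 0])
    (hf₁ : f₁ = ![0, 0, 1, 0]) (hf₂ : f₂ = ![0, 0, 0, 1])
    (w₁ w₂ : Fin 4 → k)
    (hw₁ : w₁ ∈ Submodule.span k ({f₁, f₂} : Set (Fin 4 → k)))
    (hw₂ : w₂ ∈ Submodule.span k ({f₁, f₂} : Set (Fin 4 → k)))
    (zX zY : V ⊗[k] (Fin 4 → k))
    (hzX : zX = b₁ ⊗ₜ w₁ + b₂ ⊗ₜ w₂ + y₁ ⊗ₜ e₁ + y₂ ⊗ₜ e₂)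
    (hzY : zY = -(x₁ ⊗ₜ w₁) - x₂ ⊗ₜ w₂
        - ((1 / 2 : k) • (B x₁ x₁ • bm₁ + B x₂ x₁ • bm₂)) ⊗ₜ w₁
        - ((1 / 2 : k) • (B x₁ x₂ • bm₁ + B x₂ x₂ • bm₂)) ⊗ₜ w₂
        + (B x₁ y₁ • bm₁ + B x₂ y₁ • bm₂) ⊗ₜ e₁
        + (B x₁ y₂ • bm₁ + B x₂ y₂ • bm₂) ⊗ₜ e₂) :
    (1 / 2 : k) * (LinearMap.BilinForm.tmul B (sympForm k)) zX zY =
      B x₁ y₁ * sympForm k w₁ e₁ + B x₁ y₂ * sympForm k w₁ e₂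
        + B x₂ y₁ * sympForm k w₂ e₁ + B x₂ y₂ * sympForm k w₂ e₂ :=
  half_pairing_of_projections_general k V B hB b₁ b₂ bm₁ bm₂ x₁ x₂ y₁ y₂ hbbm hx e₁ e₂ w₁ w₂ zX zY
    hzX hzY
end
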